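/- The map f : R^n → R^n is continuous, every fiber of f contains at most two points, and the ramification locus Ram(f) := { x ∈ R^n : f is injective on no neighborhood of x } is exactly the singleton {0⃗}. (In particular, f is a finite-to-one continuous self-map of R^n whose ramification locus is non-empty of topological dimension 0, witnessing the failure of manifold ramification purity of every order d < n.) -/

import Mathlib

/- Context: `R` is a linearly ordered field with its order topology, `V ⊆ R` a convex
subring, `ε ∈ V` positive with `ε⁻¹ ∉ V`, and `n = m + 2 ≥ 2`.  The space `R^n` is
`Fin (m + 2) → R` with the product topology; the last coordinate is `Fin.last (m + 1)`. -/

noncomputable section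

/-- `sSum m x = x₁² + ⋯ + x_{n-1}²` (the sum of squares of all but the last coordinate). -/
def sSum {R : Type*} [Field R] [LinearOrder R] [IsStrictOrderedRing R] (m : ℕ) (x : Fin (m + 2) → R) : R :=
  ∑ i : Fin (m + 1), x i.castSucc ^ 2

/-- `A = { x ≠ 0 : xₙ² = a·(x₁² + ⋯ + x_{n-1}²) for some a ∈ V }`. -/
def setA {R : Type*} [Field R] [LinearOrder R] [IsStrictOrderedRing R] (V : Subring R) (m : ℕ) :
    Set (Fin (m + 2) → R) :=
  {x | x ≠ 0 ∧ ∃ a ∈ V, x (Fin.last (m + 1)) ^ 2 = a * sSum m x}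

/-- `B = (R^n \ {0}) \ A`. -/
def setB {R : Type*} [Field R] [LinearOrder R] [IsStrictOrderedRing R] (V : Subring R) (m : ℕ) :
    Set (Fin (m + 2) → R) :=
  {x | x ≠ 0} \ setA V m

/-- `h(x₁,…,xₙ) = (x₁,…,x_{n-1}, ε·xₙ)`. -/
def hMap {R : Type*} [Field R] [LinearOrder R] [IsStrictOrderedRing R] (ε : R) (m : ℕ) (x : Fin (m + 2) → R) :
    Fin (m + 2) → R :=
  Function.update x (Fin.last (m + 1)) (ε * x (Fin.last (m + 1)))

/-- `f(0) = 0`, `f = id` on `A`, `f = h` on `B`. -/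
def fMap {R : Type*} [Field R] [LinearOrder R] [IsStrictOrderedRing R] (V : Subring R) (ε : R) (m : ℕ)
    (x : Fin (m + 2) → R) : Fin (m + 2) → R := by
  classical
  exact if x = 0 then 0 else if x ∈ setA V m then x else hMap ε m x

end


/-! Away from `0` the sets `A` and `B` are open, being unions of the open cones
`{y | yₙ² < c·s(y)}` with `c ∈ V` and `{y | c·s(y) < yₙ²}` with `0 ≤ c ∉ V` respectively
(convexity of `V`); there `f` is `id` or the injective linear map `h`, so it is continuous and
locally injective. Near `0` the cone `A` contains `t·v` and `B` contains `h⁻¹(t·v)` for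
`v = (1, 0, …, 0, 1)` and every `t ≠ 0`, and `f` identifies these two points. -/

section ConvexSubring

variable {R : Type*} [Field R] [LinearOrder R] [IsStrictOrderedRing R] {V : Subring R}

theorem one_lt_of_notMem_of_convex (hV : ∀ x y : R, y ∈ V → |x| ≤ |y| → x ∈ V) {a : R}
    (ha : 0 < a) (haV : a ∉ V) : 1 < a := by
  by_contra! h
  exact haV (hV a 1 V.one_mem (by rwa [abs_one, abs_of_pos ha]))

end ConvexSubring

section SumSq

variable {R : Type*} [Field R] [LinearOrder R] [IsStrictOrderedRing R] {m : ℕ}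

theorem sSum_nonneg (x : Fin (m + 2) → R) : 0 ≤ sSum m x :=
  Finset.sum_nonneg fun _ _ => sq_nonneg _

@[simp]
theorem sSum_zero : sSum m (0 : Fin (m + 2) → R) = 0 := by
  simp [sSum]

theorem sSum_smul (t : R) (x : Fin (m + 2) → R) : sSum m (t • x) = t ^ 2 * sSum m x := by
  simp only [sSum, Finset.mul_sum, Pi.smul_apply, smul_eq_mul, mul_pow]

theorem eq_zero_of_sSum_eq_zero {x : Fin (m + 2) → R} (hs : sSum m x = 0)
    (hlast : x (Fin.last (m + 1)) = 0) : x = 0 := by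
  rw [sSum, Finset.sum_eq_zero_iff_of_nonneg fun _ _ => sq_nonneg _] at hs
  funext j
  induction j using Fin.lastCases with
  | last => exact hlast
  | cast i => exact pow_eq_zero_iff two_ne_zero |>.1 (hs i (Finset.mem_univ i))

theorem exists_sSum_eq_one_and_last_eq_one :
    ∃ v : Fin (m + 2) → R, sSum m v = 1 ∧ v (Fin.last (m + 1)) = 1 :=
  ⟨Fin.snoc (Pi.single 0 1) 1, by simp [sSum, Pi.single_apply], Fin.snoc_last _ _⟩

theorem continuous_sSum [TopologicalSpace R] [IsTopologicalRing R] :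
    Continuous (sSum m : (Fin (m + 2) → R) → R) :=
  continuous_finsetSum _ fun _ _ => (continuous_apply _).pow 2

end SumSq

section Stretch

variable {R : Type*} [Field R] [LinearOrder R] [IsStrictOrderedRing R] {m : ℕ}

@[simp]
theorem hMap_last (a : R) (x : Fin (m + 2) → R) :
    hMap a m x (Fin.last (m + 1)) = a * x (Fin.last (m + 1)) :=
  Function.update_self _ _ _

@[simp]
theorem sSum_hMap (a : R) (x : Fin (m + 2) → R) : sSum m (hMap a m x) = sSum m x := by
  simp only [sSum, hMap, Function.update_of_ne (Fin.castSucc_lt_last _).ne]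

@[simp]
theorem hMap_zero (a : R) : hMap a m (0 : Fin (m + 2) → R) = 0 := by
  simp [hMap]

theorem hMap_hMap (a b : R) (x : Fin (m + 2) → R) :
    hMap a m (hMap b m x) = hMap (a * b) m x := by
  simp only [hMap, Function.update_idem, Function.update_self, mul_assoc]

theorem hMap_one (x : Fin (m + 2) → R) : hMap 1 m x = x := by
  simp [hMap]

theorem hMap_hMap_inv {a : R} (ha : a ≠ 0) (x : Fin (m + 2) → R) :
    hMap a m (hMap a⁻¹ m x) = x := by
  rw [hMap_hMap, mul_inv_cancel₀ ha, hMap_one]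

theorem hMap_inv_hMap {a : R} (ha : a ≠ 0) (x : Fin (m + 2) → R) :
    hMap a⁻¹ m (hMap a m x) = x := by
  simpa using hMap_hMap_inv (inv_ne_zero ha) x

theorem hMap_injective {a : R} (ha : a ≠ 0) :
    Function.Injective (hMap a m : (Fin (m + 2) → R) → _) :=
  Function.LeftInverse.injective (hMap_inv_hMap ha)

theorem abs_hMap_apply_le {a : R} (ha0 : 0 ≤ a) (ha1 : a ≤ 1) (x : Fin (m + 2) → R)
    (i : Fin (m + 2)) : |hMap a m x i| ≤ |x i| := by
  rcases eq_or_ne i (Fin.last (m + 1)) with rfl | hi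
  · rw [hMap_last, abs_mul, abs_of_nonneg ha0]
    exact mul_le_of_le_one_left (abs_nonneg _) ha1
  · rw [hMap, Function.update_of_ne hi]

theorem continuous_hMap [TopologicalSpace R] [IsTopologicalRing R] (a : R) :
    Continuous (hMap a m : (Fin (m + 2) → R) → _) :=
  continuous_id.update _ (continuous_const.mul (continuous_apply _))

end Stretch

section Pieces

variable {R : Type*} [Field R] [LinearOrder R] [IsStrictOrderedRing R] {m : ℕ} {V : Subring R}

theorem sSum_pos_of_mem_setA {x : Fin (m + 2) → R} (hx : x ∈ setA V m) : 0 < sSum m x := by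
  obtain ⟨hx0, a, -, hxa⟩ := hx
  refine (sSum_nonneg x).lt_of_ne' fun hs => hx0 (eq_zero_of_sSum_eq_zero hs ?_)
  rwa [hs, mul_zero, pow_eq_zero_iff two_ne_zero] at hxa

theorem last_ne_zero_of_mem_setB {x : Fin (m + 2) → R} (hx : x ∈ setB V m) :
    x (Fin.last (m + 1)) ≠ 0 := fun hlast =>
  hx.2 ⟨hx.1, 0, V.zero_mem, by rw [hlast, zero_mul, sq, zero_mul]⟩

theorem setOf_sq_last_lt_subset_setA (hV : ∀ x y : R, y ∈ V → |x| ≤ |y| → x ∈ V) {c : R}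
    (hc : c ∈ V) :
    {y : Fin (m + 2) → R | y (Fin.last (m + 1)) ^ 2 < c * sSum m y} ⊆ setA V m := by
  intro y hy
  have hs : 0 < sSum m y := (sSum_nonneg y).lt_of_ne' fun hs => by
    rw [Set.mem_ofPred, hs, mul_zero] at hy
    exact (sq_nonneg _).not_gt hy
  refine ⟨fun h0 => by simp [h0] at hs, y (Fin.last (m + 1)) ^ 2 / sSum m y, ?_,
    (div_mul_cancel₀ _ hs.ne').symm⟩
  have hq0 : 0 ≤ y (Fin.last (m + 1)) ^ 2 / sSum m y := div_nonneg (sq_nonneg _) hs.le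
  have hqc : y (Fin.last (m + 1)) ^ 2 / sSum m y < c := (div_lt_iff₀ hs).2 hy
  exact hV _ c hc (by rw [abs_of_nonneg hq0]; exact hqc.le.trans (le_abs_self c))

theorem setOf_mul_sSum_lt_subset_setB (hV : ∀ x y : R, y ∈ V → |x| ≤ |y| → x ∈ V) {c : R}
    (hc0 : 0 ≤ c) (hc : c ∉ V) :
    {y : Fin (m + 2) → R | c * sSum m y < y (Fin.last (m + 1)) ^ 2} ⊆ setB V m := by
  intro y hy
  refine ⟨fun h0 => by simp [h0] at hy, fun ⟨_, a, ha, hya⟩ => hc ?_⟩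
  rw [Set.mem_ofPred, hya] at hy
  have hca : c < a := lt_of_mul_lt_mul_right hy (sSum_nonneg y)
  exact hV c a ha (by rw [abs_of_nonneg hc0]; exact hca.le.trans (le_abs_self a))

theorem exists_mem_sq_last_lt {x : Fin (m + 2) → R} (hx : x ∈ setA V m) :
    ∃ c ∈ V, x (Fin.last (m + 1)) ^ 2 < c * sSum m x := by
  have hs := sSum_pos_of_mem_setA hx
  obtain ⟨-, a, ha, hxa⟩ := hx
  refine ⟨a + 1, V.add_mem ha V.one_mem, ?_⟩
  rw [hxa]
  linarith

theorem exists_notMem_mul_sSum_lt {ε : R} (hε0 : 0 < ε) (hεinv : ε⁻¹ ∉ V)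
    {x : Fin (m + 2) → R} (hx : x ∈ setB V m) :
    ∃ c, 0 ≤ c ∧ c ∉ V ∧ c * sSum m x < x (Fin.last (m + 1)) ^ 2 := by
  have hlast : 0 < x (Fin.last (m + 1)) ^ 2 := by positivity [last_ne_zero_of_mem_setB hx]
  rcases (sSum_nonneg x).eq_or_lt with hs | hs
  · exact ⟨ε⁻¹, by positivity, hεinv, by rwa [← hs, mul_zero]⟩
  · -- if `c = xₙ²/(2s)` were in `V`, then so would be `c + c`, putting `x` in `A`
    refine ⟨x (Fin.last (m + 1)) ^ 2 / (2 * sSum m x), by positivity, fun hc => hx.2 ?_, ?_⟩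
    · refine ⟨hx.1, _, V.add_mem hc hc, ?_⟩
      field_simp
      ring
    · rw [div_mul_eq_mul_div, div_lt_iff₀ (by positivity)]
      nlinarith

end Pieces

section Topology

variable {R : Type*} [Field R] [LinearOrder R] [IsStrictOrderedRing R] [TopologicalSpace R]
  [OrderTopology R] {m : ℕ} {V : Subring R}

theorem isOpen_setA (hV : ∀ x y : R, y ∈ V → |x| ≤ |y| → x ∈ V) :
    IsOpen (setA V m) := by
  refine isOpen_iff_forall_mem_open.2 fun x hx => ?_
  obtain ⟨c, hc, hxc⟩ := exists_mem_sq_last_lt hx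
  exact ⟨_, setOf_sq_last_lt_subset_setA hV hc,
    isOpen_lt ((continuous_apply _).pow 2) (continuous_const.mul continuous_sSum), hxc⟩

theorem isOpen_setB (hV : ∀ x y : R, y ∈ V → |x| ≤ |y| → x ∈ V) {ε : R} (hε0 : 0 < ε)
    (hεinv : ε⁻¹ ∉ V) : IsOpen (setB V m) := by
  refine isOpen_iff_forall_mem_open.2 fun x hx => ?_
  obtain ⟨c, hc0, hc, hxc⟩ := exists_notMem_mul_sSum_lt hε0 hεinv hx
  exact ⟨_, setOf_mul_sSum_lt_subset_setB hV hc0 hc,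
    isOpen_lt (continuous_const.mul continuous_sSum) ((continuous_apply _).pow 2), hxc⟩

end Topology

section Map

variable {R : Type*} [Field R] [LinearOrder R] [IsStrictOrderedRing R] {m : ℕ} {V : Subring R}
  {ε : R}

theorem fMap_of_mem_setA {x : Fin (m + 2) → R} (hx : x ∈ setA V m) : fMap V ε m x = x := by
  rw [fMap, if_neg hx.1, if_pos hx]

theorem fMap_of_mem_setB {x : Fin (m + 2) → R} (hx : x ∈ setB V m) :
    fMap V ε m x = hMap ε m x := by
  rw [fMap, if_neg hx.1, if_neg hx.2]

theorem fMap_eq_or_eq_hMap (x : Fin (m + 2) → R) :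
    fMap V ε m x = x ∨ fMap V ε m x = hMap ε m x := by
  unfold fMap
  split_ifs with h0
  exacts [Or.inl h0.symm, Or.inl rfl, Or.inr rfl]

theorem abs_fMap_apply_le (hε0 : 0 ≤ ε) (hε1 : ε ≤ 1) (x : Fin (m + 2) → R)
    (i : Fin (m + 2)) : |fMap V ε m x i| ≤ |x i| := by
  rcases fMap_eq_or_eq_hMap (V := V) (ε := ε) x with h | h <;> rw [h]
  exact abs_hMap_apply_le hε0 hε1 x i

theorem encard_fMap_preimage_le_two (hε : ε ≠ 0) (y : Fin (m + 2) → R) :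
    (fMap V ε m ⁻¹' {y}).encard ≤ 2 := by
  have hsub : fMap V ε m ⁻¹' {y} ⊆ {y, hMap ε⁻¹ m y} := by
    rintro x (rfl : fMap V ε m x = _)
    rcases fMap_eq_or_eq_hMap (V := V) (ε := ε) x with h | h <;> rw [h]
    exacts [Or.inl rfl, Or.inr (hMap_inv_hMap hε x).symm]
  calc (fMap V ε m ⁻¹' {y}).encard
      ≤ ({y, hMap ε⁻¹ m y} : Set _).encard := Set.encard_mono hsub
    _ ≤ ({hMap ε⁻¹ m y} : Set _).encard + 1 := Set.encard_insert_le _ _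
    _ = 2 := by rw [Set.encard_singleton]; rfl

variable [TopologicalSpace R] [OrderTopology R]

theorem continuousAt_fMap_zero (hε0 : 0 ≤ ε) (hε1 : ε ≤ 1) :
    ContinuousAt (fMap V ε m) 0 := by
  have hf0 : fMap V ε m 0 = 0 := by simp [fMap]
  rw [ContinuousAt, hf0, tendsto_pi_nhds]
  intro i
  have hxi : Filter.Tendsto (fun x : Fin (m + 2) → R => |x i|) (nhds 0) (nhds 0) := by
    simpa using ((continuous_apply i).abs).tendsto (0 : Fin (m + 2) → R)
  refine tendsto_of_tendsto_of_tendsto_of_le_of_le (by simpa using hxi.neg) hxi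
    (fun x => neg_le_of_abs_le (abs_fMap_apply_le hε0 hε1 x i))
    (fun x => le_of_abs_le (abs_fMap_apply_le hε0 hε1 x i))

theorem continuous_fMap (hV : ∀ x y : R, y ∈ V → |x| ≤ |y| → x ∈ V) (hε0 : 0 < ε)
    (hεinv : ε⁻¹ ∉ V) : Continuous (fMap V ε m) := by
  have hε1 : ε < 1 := (one_lt_inv₀ hε0).1 (one_lt_of_notMem_of_convex hV (by positivity) hεinv)
  refine continuous_iff_continuousAt.2 fun x => ?_
  by_cases hx0 : x = 0
  · exact hx0 ▸ continuousAt_fMap_zero hε0.le hε1.le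
  by_cases hA : x ∈ setA V m
  · exact continuousAt_id.congr <| Filter.eventuallyEq_of_mem ((isOpen_setA hV).mem_nhds hA)
      fun y hy => (fMap_of_mem_setA hy).symm
  · exact (continuous_hMap ε).continuousAt.congr <| Filter.eventuallyEq_of_mem
      ((isOpen_setB hV hε0 hεinv).mem_nhds ⟨hx0, hA⟩) fun y hy => (fMap_of_mem_setB hy).symm

end Map

section Ramification

variable {R : Type*} [Field R] [LinearOrder R] [IsStrictOrderedRing R] [TopologicalSpace R]
  [OrderTopology R] {m : ℕ} {V : Subring R} {ε : R}

theorem exists_injOn_fMap_of_ne_zero (hV : ∀ x y : R, y ∈ V → |x| ≤ |y| → x ∈ V)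
    (hε0 : 0 < ε) (hεinv : ε⁻¹ ∉ V) {x : Fin (m + 2) → R} (hx0 : x ≠ 0) :
    ∃ U ∈ nhds x, Set.InjOn (fMap V ε m) U := by
  by_cases hA : x ∈ setA V m
  · exact ⟨_, (isOpen_setA hV).mem_nhds hA, Set.injOn_id _ |>.congr
      fun y hy => (fMap_of_mem_setA hy).symm⟩
  · exact ⟨_, (isOpen_setB hV hε0 hεinv).mem_nhds ⟨hx0, hA⟩,
      (hMap_injective hε0.ne').injOn.congr fun y hy => (fMap_of_mem_setB hy).symm⟩

theorem not_injOn_fMap_of_mem_nhds_zero (hV : ∀ x y : R, y ∈ V → |x| ≤ |y| → x ∈ V)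
    (hε0 : 0 < ε) (hεinv : ε⁻¹ ∉ V) {U : Set (Fin (m + 2) → R)} (hU : U ∈ nhds 0) :
    ¬ Set.InjOn (fMap V ε m) U := by
  have hε1 : 1 < ε⁻¹ := one_lt_of_notMem_of_convex hV (by positivity) hεinv
  obtain ⟨v, hsv, hlv⟩ := exists_sSum_eq_one_and_last_eq_one (R := R) (m := m)
  have hp : Filter.Tendsto (fun t : R => t • v) (nhdsWithin 0 (Set.Ioi 0)) (nhds 0) :=
    ((continuous_id.smul continuous_const).tendsto' 0 0 (zero_smul R v)).mono_left
      nhdsWithin_le_nhds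
  have hq : Filter.Tendsto (fun t : R => hMap ε⁻¹ m (t • v)) (nhdsWithin 0 (Set.Ioi 0))
      (nhds 0) :=
    ((continuous_hMap ε⁻¹).tendsto' 0 0 (hMap_zero _)).comp hp
  obtain ⟨t, hpt, hqt, ht⟩ :=
    ((hp.eventually_mem hU).and ((hq.eventually_mem hU).and self_mem_nhdsWithin)).exists
  have hA : t • v ∈ setA V m :=
    setOf_sq_last_lt_subset_setA hV (V.add_mem V.one_mem V.one_mem) <| by
      simp only [Set.mem_ofPred, sSum_smul, hsv, Pi.smul_apply, hlv, smul_eq_mul]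
      nlinarith [pow_pos ht 2]
  have hB : hMap ε⁻¹ m (t • v) ∈ setB V m :=
    setOf_mul_sSum_lt_subset_setB hV (by positivity) hεinv <| by
      simp only [Set.mem_ofPred, sSum_hMap, sSum_smul, hsv, hMap_last, Pi.smul_apply, hlv,
        smul_eq_mul]
      nlinarith [mul_pos (mul_pos (inv_pos.2 hε0) (sub_pos.2 hε1)) (pow_pos ht 2)]
  intro hinj
  have heq : fMap V ε m (hMap ε⁻¹ m (t • v)) = fMap V ε m (t • v) := by
    rw [fMap_of_mem_setB hB, fMap_of_mem_setA hA, hMap_hMap_inv hε0.ne']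
  rw [hinj hqt hpt heq] at hB
  exact hB.2 hA

end Ramification

theorem statement_1_general {R : Type*} [Field R] [LinearOrder R] [IsStrictOrderedRing R] [TopologicalSpace R] [OrderTopology R]
    (V : Subring R) (hV : ∀ x y : R, y ∈ V → |x| ≤ |y| → x ∈ V)
    (ε : R) (hε0 : 0 < ε) (hεinv : ε⁻¹ ∉ V) (m : ℕ) :
    Continuous (fMap V ε m) ∧
    (∀ y : Fin (m + 2) → R, (fMap V ε m ⁻¹' {y}).encard ≤ 2) ∧
    {x : Fin (m + 2) → R | ¬ ∃ U ∈ nhds x, Set.InjOn (fMap V ε m) U} = {0} := by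
  refine ⟨continuous_fMap hV hε0 hεinv, encard_fMap_preimage_le_two hε0.ne', ?_⟩
  ext x
  refine ⟨fun hx => by_contra fun hx0 => hx (exists_injOn_fMap_of_ne_zero hV hε0 hεinv hx0), ?_⟩
  rintro rfl ⟨U, hU, hinj⟩
  exact not_injOn_fMap_of_mem_nhds_zero hV hε0 hεinv hU hinj

/-- `f` is continuous, every fiber of `f` has at most two points, and the
ramification locus of `f` is exactly `{0}`. -/
theorem statement_1 {R : Type*} [Field R] [LinearOrder R] [IsStrictOrderedRing R] [TopologicalSpace R] [OrderTopology R]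
    (V : Subring R) (hV : ∀ x y : R, y ∈ V → |x| ≤ |y| → x ∈ V)
    (ε : R) (hε0 : 0 < ε) (hεV : ε ∈ V) (hεinv : ε⁻¹ ∉ V) (m : ℕ) :
    Continuous (fMap V ε m) ∧
    (∀ y : Fin (m + 2) → R, (fMap V ε m ⁻¹' {y}).encard ≤ 2) ∧
    {x : Fin (m + 2) → R | ¬ ∃ U ∈ nhds x, Set.InjOn (fMap V ε m) U} = {0} :=
  statement_1_general V hV ε hε0 hεinv m
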